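/- arXiv:1706.05456 — 5 statements merged into one kernel-verified Lean document; each statement's English description precedes it below -/
import Mathlib

section
/- Let T be a torus acting on V = 𝕜^n with weights s_1,…,s_n, and let v ∈ V have support I. Then v is semisimple (T·v closed) if and only if 0 lies in the relative interior of the convex hull of {s_i : i ∈ I}, i.e., 0 is a convex combination of the s_i (i ∈ I) with all coefficients strictly positive. -/
/-!
Both sides are conditions over `ℚ` once a cocharacter is allowed to be rational (clear
denominators), and then the equivalence is Stiemke's theorem of the alternative for the
vectors `s i`: either they admit a strictly positive linear relation, or some linear form
is nonnegative on all of them and positive on one. Stiemke follows from Farkas' lemma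
applied to each `-s i`, and Farkas' lemma is proved by induction on the number of vectors,
projecting along the new vector onto the kernel of a separating form.
-/

open Module Finset

lemma exists_nonneg_sum_smul_insert {R M ι : Type*} [Semiring R] [PartialOrder R]
    [AddCommMonoid M] [Module R M] [DecidableEq ι] {v : ι → M} {s : Finset ι} {a : ι}
    (ha : a ∉ s) {y : ι → R} (hy : ∀ i ∈ s, 0 ≤ y i) {β : R} (hβ : 0 ≤ β) :
    ∃ y' : ι → R, (∀ i ∈ insert a s, 0 ≤ y' i) ∧
      ∑ i ∈ insert a s, y' i • v i = β • v a + ∑ i ∈ s, y i • v i := by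
  refine ⟨Function.update y a β, ?_, ?_⟩
  · refine forall_mem_insert _ _ _ |>.2 ⟨by simpa using hβ, fun i hi => ?_⟩
    simpa [Function.update_of_ne (ne_of_mem_of_not_mem hi ha)] using hy i hi
  · rw [sum_insert ha, Function.update_self]
    congr 1
    exact sum_congr rfl fun i hi => by rw [Function.update_of_ne (ne_of_mem_of_not_mem hi ha)]

section Alternatives

variable {𝕜 M ι : Type*} [Field 𝕜] [LinearOrder 𝕜] [IsStrictOrderedRing 𝕜]
  [AddCommGroup M] [Module 𝕜 M]

theorem farkas_alternative [DecidableEq ι] (I : Finset ι) (v : ι → M) (c : M) :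
    (∃ y : ι → 𝕜, (∀ i ∈ I, 0 ≤ y i) ∧ ∑ i ∈ I, y i • v i = c) ∨
      ∃ f : Dual 𝕜 M, (∀ i ∈ I, 0 ≤ f (v i)) ∧ f c < 0 := by
  induction I using Finset.induction generalizing v c with
  | empty =>
    by_cases hc : c = 0
    · exact .inl ⟨0, by simp, by simp [hc]⟩
    · obtain ⟨f, hf⟩ := Projective.exists_dual_eq_one 𝕜 hc
      exact .inr ⟨-f, by simp, by simp [hf]⟩
  | @insert a s ha ih =>
    rcases ih v c with ⟨y, hy, rfl⟩ | ⟨f, hf, hfc⟩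
    · obtain ⟨y', hy', hsum⟩ := exists_nonneg_sum_smul_insert (v := v) ha hy le_rfl
      exact .inl ⟨y', hy', by simpa using hsum⟩
    by_cases hfa : 0 ≤ f (v a)
    · exact .inr ⟨f, forall_mem_insert _ _ _ |>.2 ⟨hfa, hf⟩, hfc⟩
    push Not at hfa
    -- `P` projects along `v a` onto `ker f`.
    set P : M →ₗ[𝕜] M := LinearMap.id - ((f (v a))⁻¹ • f).smulRight (v a)
    have hP : ∀ x, P x = x - (f x / f (v a)) • v a := fun x => by
      simp [P, div_eq_inv_mul]
    rcases ih (P ∘ v) (P c) with ⟨y, hy, hPc⟩ | ⟨g, hg, hgc⟩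
    · set w := ∑ i ∈ s, y i • v i
      have hcw : c - w = (f (c - w) / f (v a)) • v a := by
        rw [← sub_eq_zero, ← hP, map_sub, ← hPc]
        simp [w, map_sum]
      have hfw : 0 ≤ f w := by
        simpa [w, map_sum] using sum_nonneg fun i hi => mul_nonneg (hy i hi) (hf i hi)
      have hβ : 0 ≤ f (c - w) / f (v a) :=
        div_nonneg_of_nonpos (by rw [map_sub]; linarith) hfa.le
      obtain ⟨y', hy', hsum⟩ := exists_nonneg_sum_smul_insert (v := v) ha hy hβ
      exact .inl ⟨y', hy', by rw [hsum, ← hcw, sub_add_cancel]⟩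
    · refine .inr ⟨g ∘ₗ P, forall_mem_insert _ _ _ |>.2 ⟨?_, hg⟩, hgc⟩
      simp [hP, hfa.ne]

theorem stiemke_alternative [DecidableEq ι] (I : Finset ι) (v : ι → M) :
    (∃ α : ι → 𝕜, (∀ i ∈ I, 0 < α i) ∧ ∑ i ∈ I, α i • v i = 0) ∨
      ∃ f : Dual 𝕜 M, (∀ i ∈ I, 0 ≤ f (v i)) ∧ ∃ i ∈ I, 0 < f (v i) := by
  refine or_iff_not_imp_right.2 fun h => ?_
  push Not at h
  have hneg : ∀ i₀ ∈ I, ∃ y : ι → 𝕜, (∀ i ∈ I, 0 ≤ y i) ∧ ∑ i ∈ I, y i • v i = -v i₀ :=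
    fun i₀ hi₀ => (farkas_alternative I v (-v i₀)).resolve_right fun ⟨f, hf, hfc⟩ => by
      have := h f hf i₀ hi₀
      simp only [map_neg] at hfc
      linarith
  choose! Y hY hYsum using hneg
  refine ⟨fun i => 1 + ∑ i₀ ∈ I, Y i₀ i, fun i hi => ?_, ?_⟩
  · linarith [sum_nonneg fun i₀ hi₀ => hY i₀ hi₀ i hi]
  · simp_rw [add_smul, one_smul, sum_smul, sum_add_distrib]
    rw [sum_comm, sum_congr rfl hYsum, sum_neg_distrib, add_neg_cancel]

lemma not_exists_dual_pos_of_sum_smul_eq_zero {I : Finset ι} {v : ι → M} {α : ι → 𝕜}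
    (hα : ∀ i ∈ I, 0 < α i) (hsum : ∑ i ∈ I, α i • v i = 0) :
    ¬ ∃ f : Dual 𝕜 M, (∀ i ∈ I, 0 ≤ f (v i)) ∧ ∃ i ∈ I, 0 < f (v i) := by
  rintro ⟨f, hf, i, hi, hfi⟩
  have hpos : 0 < ∑ i ∈ I, α i * f (v i) :=
    sum_pos' (fun i hi => mul_nonneg (hα i hi).le (hf i hi)) ⟨i, hi, mul_pos (hα i hi) hfi⟩
  exact hpos.ne' (by simpa [map_sum] using congrArg f hsum)

lemma exists_convex_combination_eq_zero {I : Finset ι} (hI : I.Nonempty) {v : ι → M}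
    {α : ι → 𝕜} (hα : ∀ i ∈ I, 0 < α i) (hsum : ∑ i ∈ I, α i • v i = 0) :
    ∃ β : ι → 𝕜, (∀ i ∈ I, 0 < β i) ∧ ∑ i ∈ I, β i = 1 ∧ ∑ i ∈ I, β i • v i = 0 := by
  have hS : 0 < ∑ i ∈ I, α i := sum_pos hα hI
  refine ⟨fun i => α i / ∑ i ∈ I, α i, fun i hi => div_pos (hα i hi) hS, ?_, ?_⟩
  · rw [← sum_div, div_self hS.ne']
  · simp_rw [div_eq_inv_mul, mul_smul, ← smul_sum, hsum, smul_zero]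

end Alternatives

lemma exists_pos_nat_mul_eq_int {κ : Type*} [Fintype κ] (q : κ → ℚ) :
    ∃ N : ℕ, 0 < N ∧ ∃ z : κ → ℤ, ∀ j, (z j : ℚ) = N * q j := by
  choose m hm using fun j => dvd_prod_of_mem (fun k => (q k).den) (mem_univ j)
  refine ⟨∏ j, (q j).den, prod_pos fun j _ => (q j).pos, fun j => (q j).num * m j, fun j => ?_⟩
  rw [hm j]
  push_cast
  rw [← Rat.mul_den_eq_num]
  ring

lemma exists_int_cocharacter_iff_exists_dual {ι κ : Type*} [Fintype κ] (s : ι → κ → ℤ)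
    (I : Finset ι) :
    (∃ lam : κ → ℤ, (∀ i ∈ I, 0 ≤ ∑ j, s i j * lam j) ∧ ∃ i ∈ I, 0 < ∑ j, s i j * lam j) ↔
      ∃ f : Dual ℚ (κ → ℚ), (∀ i ∈ I, 0 ≤ f (fun j => (s i j : ℚ))) ∧
        ∃ i ∈ I, 0 < f (fun j => (s i j : ℚ)) := by
  constructor
  · rintro ⟨lam, hlam, i, hi, hpos⟩
    have hf : ∀ i, Fintype.linearCombination ℚ (fun j => (lam j : ℚ)) (fun j => (s i j : ℚ)) =
        ((∑ j, s i j * lam j : ℤ) : ℚ) := fun i => by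
      simp [Fintype.linearCombination_apply]
    exact ⟨_, fun i hi => by rw [hf]; exact_mod_cast hlam i hi,
      i, hi, by rw [hf]; exact_mod_cast hpos⟩
  · rintro ⟨f, hf, i, hi, hpos⟩
    classical
    obtain ⟨N, hN, z, hz⟩ := exists_pos_nat_mul_eq_int fun j => f fun k => if j = k then 1 else 0
    have hcast : ∀ i, ((∑ j, s i j * z j : ℤ) : ℚ) = N * f (fun j => (s i j : ℚ)) := fun i => by
      rw [f.pi_apply_eq_sum_univ, mul_sum]
      push_cast [hz]
      exact sum_congr rfl fun j _ => by rw [smul_eq_mul]; ring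
    have hN' : (0 : ℚ) < N := by exact_mod_cast hN
    refine ⟨z, fun i hi => ?_, i, hi, ?_⟩
    · exact_mod_cast (hcast i).symm ▸ mul_nonneg hN'.le (hf i hi)
    · exact_mod_cast (hcast i).symm ▸ mul_pos hN' hpos

/-- Semisimplicity criterion for torus representations: an element with nonempty support
`I` is semisimple (there is no cocharacter `λ` with `⟨s_i, λ⟩ ≥ 0` for all `i ∈ I` and
`⟨s_i, λ⟩ > 0` for some `i ∈ I`; Hilbert–Mumford) iff `0` lies in the relative interior
of the convex hull of `{s_i : i ∈ I}`, i.e. is a strictly positive convex combination. -/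
theorem stmt6 {n r : ℕ} (s : Fin n → Fin r → ℤ) (I : Finset (Fin n)) (hI : I.Nonempty) :
    (¬ ∃ lam : Fin r → ℤ,
        (∀ i ∈ I, 0 ≤ ∑ j, s i j * lam j) ∧ ∃ i ∈ I, 0 < ∑ j, s i j * lam j) ↔
      ∃ α : Fin n → ℚ, (∀ i ∈ I, 0 < α i) ∧ (∑ i ∈ I, α i = 1) ∧
        ∑ i ∈ I, α i • (fun j => (s i j : ℚ)) = 0 := by
  rw [exists_int_cocharacter_iff_exists_dual]
  constructor
  · intro h
    obtain ⟨α, hα, hsum⟩ := (stiemke_alternative I fun i j => (s i j : ℚ)).resolve_right h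
    exact exists_convex_combination_eq_zero hI hα hsum
  · rintro ⟨α, hα, -, hsum⟩
    exact not_exists_dual_pos_of_sum_smul_eq_zero hα hsum
end

section
/- Let T be a torus acting on V = 𝕜^n with n×r weight matrix S. The null fiber μ⁻¹(0) of the moment map is irreducible if and only if for every i ∈ {1,…,n}, deleting the i-th row of S does not lower its rank: rk(S_î) = rk(S). -/
/-!
Write `W = {z | z ᵥ* S = 0}` for the space of linear relations among the rows of `S`; then
`rk S_î = rk S` iff some `z ∈ W` has `zᵢ ≠ 0`, and the null fiber is `Z = {(x, y) | x ⊙ y ∈ W}`.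
By the Nullstellensatz, irreducibility means that the vanishing ideal of `Z` is prime.
If every `z ∈ W` has `zᵢ = 0`, then `xᵢ yᵢ` vanishes on `Z` while neither `xᵢ` nor `yᵢ` does.
Conversely, if `W` lies in no coordinate hyperplane it contains some `z` without zero coordinates.
The points of `Z` with all `xᵢ ≠ 0` are exactly the values of the polynomial map
`(t, w) ↦ (t, wᵢ ∏_{k ≠ i} t_k)`, `w ∈ W`, and they are dense in `Z`: through every point of `Z`
runs a curve with `xᵢ(s) yᵢ(s) = xᵢ yᵢ + s² zᵢ` and `xᵢ(s) ≠ 0` for `s ≠ 0`. Hence the vanishing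
ideal of `Z` is the kernel of a homomorphism into a polynomial ring, so it is prime.
-/

open Matrix

theorem PrimeSpectrum.irreducibleSpace_quotient_iff {R : Type*} [CommRing R] (I : Ideal R) :
    IrreducibleSpace (PrimeSpectrum (R ⧸ I)) ↔ I.radical.IsPrime := by
  have hcomap : (nilradical (R ⧸ I)).comap (Ideal.Quotient.mk I) = I.radical := by
    rw [nilradical, Ideal.comap_radical, Ideal.zero_eq_bot, ← RingHom.ker_eq_comap_bot,
      Ideal.mk_ker]
  have hmap : (nilradical (R ⧸ I)) = I.radical.map (Ideal.Quotient.mk I) := by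
    rw [← hcomap, Ideal.map_comap_of_surjective _ Ideal.Quotient.mk_surjective]
  rw [PrimeSpectrum.irreducibleSpace_iff_isPrime_nilradical]
  refine ⟨fun h => hcomap ▸ Ideal.comap_isPrime _ _, fun h => hmap ▸ ?_⟩
  exact Ideal.isPrime_map_quotientMk_of_isPrime Ideal.le_radical

section Span

variable {K V ι : Type*} [Field K] [AddCommGroup V] [Module K V] [DecidableEq ι]

theorem mem_span_range_ne_iff_exists_sum_eq_zero [Fintype ι] (v : ι → V) (i : ι) :
    v i ∈ Submodule.span K (Set.range fun k : {j // j ≠ i} => v k) ↔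
      ∃ c : ι → K, ∑ k, c k • v k = 0 ∧ c i ≠ 0 := by
  constructor
  · rw [Submodule.mem_span_range_iff_exists_fun]
    rintro ⟨c, hc⟩
    refine ⟨fun j => if h : j = i then -1 else c ⟨j, h⟩, ?_, by simp⟩
    rw [Fintype.sum_eq_add_sum_subtype_ne _ i]
    simp only [↓reduceDIte, neg_one_smul, neg_add_eq_zero]
    rw [← hc]
    exact Finset.sum_congr rfl fun k _ => by rw [dif_neg k.prop]
  · rintro ⟨c, hc, hci⟩
    rw [Fintype.sum_eq_add_sum_subtype_ne _ i, add_eq_zero_iff_eq_neg] at hc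
    have : v i = -(c i)⁻¹ • ∑ k : {j // j ≠ i}, c k • v k := by
      rw [neg_smul, ← smul_neg, ← hc, inv_smul_smul₀ hci]
    rw [this]
    exact Submodule.smul_mem _ _ (Submodule.sum_mem _ fun k _ =>
      Submodule.smul_mem _ _ (Submodule.subset_span ⟨k, rfl⟩))

theorem finrank_span_range_ne_eq_iff [FiniteDimensional K V] (v : ι → V) (i : ι) :
    Module.finrank K (Submodule.span K (Set.range fun k : {j // j ≠ i} => v k)) =
        Module.finrank K (Submodule.span K (Set.range v)) ↔
      v i ∈ Submodule.span K (Set.range fun k : {j // j ≠ i} => v k) := by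
  have hle : Submodule.span K (Set.range fun k : {j // j ≠ i} => v k) ≤
      Submodule.span K (Set.range v) :=
    Submodule.span_mono (Set.range_comp_subset_range _ v)
  constructor
  · intro h
    rw [Submodule.eq_of_le_of_finrank_eq hle h]
    exact Submodule.subset_span ⟨i, rfl⟩
  · intro h
    have hge : Submodule.span K (Set.range v) ≤
        Submodule.span K (Set.range fun k : {j // j ≠ i} => v k) := by
      refine Submodule.span_le.mpr ?_
      rintro _ ⟨k, rfl⟩
      by_cases hk : k = i
      · exact hk ▸ h
      · exact Submodule.subset_span ⟨⟨k, hk⟩, rfl⟩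
    rw [le_antisymm hle hge]

theorem Matrix.rank_submatrix_ne_eq_rank_iff [Fintype ι] {m : Type*} [Fintype m]
    (S : Matrix ι m K) (i : ι) :
    (S.submatrix (fun k : {j // j ≠ i} => (k : ι)) id).rank = S.rank ↔
      ∃ z : ι → K, z ᵥ* S = 0 ∧ z i ≠ 0 := by
  rw [rank_eq_finrank_span_row, rank_eq_finrank_span_row]
  simp only [vecMul_eq_sum]
  exact (finrank_span_range_ne_eq_iff (fun k => S k) i).trans
    (mem_span_range_ne_iff_exists_sum_eq_zero _ i)

end Span

theorem exists_add_mul_ne_zero {K ι : Type*} [Field K] [Infinite K] [Fintype ι] (z w : ι → K) :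
    ∃ c : K, ∀ i, z i ≠ 0 ∨ w i ≠ 0 → z i + c * w i ≠ 0 := by
  classical
  obtain ⟨c, hc⟩ := Infinite.exists_notMem_finset (Finset.univ.image fun i => -z i / w i)
  refine ⟨c, fun i hi h => ?_⟩
  by_cases hw : w i = 0
  · simp_all
  · exact hc (Finset.mem_image.mpr ⟨i, Finset.mem_univ _, by field_simp; linear_combination -h⟩)

theorem Submodule.exists_forall_apply_ne_zero {K ι : Type*} [Field K] [Infinite K] [Fintype ι]
    (W : Submodule K (ι → K)) (h : ∀ i, ∃ z ∈ W, z i ≠ 0) : ∃ z ∈ W, ∀ i, z i ≠ 0 := by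
  classical
  suffices ∀ F : Finset ι, ∃ z ∈ W, ∀ i ∈ F, z i ≠ 0 by
    simpa using this Finset.univ
  intro F
  induction F using Finset.induction with
  | empty => exact ⟨0, W.zero_mem, by simp⟩
  | insert i₀ F _ ih =>
    obtain ⟨z, hz, hzF⟩ := ih
    obtain ⟨w, hw, hwi₀⟩ := h i₀
    obtain ⟨c, hc⟩ := exists_add_mul_ne_zero z w
    refine ⟨z + c • w, W.add_mem hz (W.smul_mem c hw), fun i hi => hc i ?_⟩
    rcases Finset.mem_insert.mp hi with rfl | hi
    · exact Or.inr hwi₀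
    · exact Or.inl (hzF i hi)

section Curves

open Polynomial

theorem MvPolynomial.eval_eq_zero_of_eval_curve {K σ : Type*} [Field K] [Infinite K]
    (f : MvPolynomial σ K) (γ : σ → K[X]) (t : K)
    (h : ∀ s ≠ t, MvPolynomial.eval (fun k => (γ k).eval s) f = 0) :
    MvPolynomial.eval (fun k => (γ k).eval t) f = 0 := by
  have heval (s : K) : (aeval γ f).eval s = MvPolynomial.eval (fun k => (γ k).eval s) f := by
    rw [← Polynomial.coe_aeval_eq_eval, comp_aeval_apply, ← MvPolynomial.coe_aeval_eq_eval]
    rfl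
  have hzero : aeval γ f = 0 :=
    Polynomial.eq_zero_of_infinite_isRoot _ <| (Set.finite_singleton t).infinite_compl.mono
      fun s hs => (heval s).trans (h s hs)
  rw [← heval, hzero, Polynomial.eval_zero]

theorem exists_curve_eval_mul_eval_eq {K : Type*} [Field K] (a b : K) {z : K} (hz : z ≠ 0) :
    ∃ x y : K[X], x.eval 0 = a ∧ y.eval 0 = b ∧
      (∀ s, x.eval s * y.eval s = a * b + s ^ 2 * z) ∧ ∀ s ≠ 0, x.eval s ≠ 0 := by
  by_cases ha : a = 0
  · subst ha
    by_cases hb : b = 0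
    · subst hb
      exact ⟨C z * X, X, by simp, by simp, fun s => by simp; ring, fun s hs => by simp [hz, hs]⟩
    · exact ⟨C (z / b) * X ^ 2, C b, by simp, by simp, fun s => by simp; field_simp,
        fun s hs => by simp [hz, hs, hb]⟩
  · exact ⟨C a, C b + C (z / a) * X ^ 2, by simp, by simp, fun s => by simp; field_simp,
      fun s _ => by simpa⟩

end Curves

open MvPolynomial

section HadamardPreimage

variable {K ι : Type*} [Field K]

def hadamardPreimage (W : Submodule K (ι → K)) : Set (ι ⊕ ι → K) :=
  {p | p ∘ Sum.inl * p ∘ Sum.inr ∈ W}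

theorem exists_apply_ne_zero_of_isPrime_vanishingIdeal {W : Submodule K (ι → K)}
    (h : (vanishingIdeal K (hadamardPreimage W)).IsPrime) (i : ι) : ∃ z ∈ W, z i ≠ 0 := by
  classical
  by_contra! h0
  have hxy : X (Sum.inl i) * X (Sum.inr i) ∈ vanishingIdeal K (hadamardPreimage W) :=
    fun p hp => by simpa using h0 _ hp
  have hmem (a b : ι → K) (hab : a * b = 0) : Sum.elim a b ∈ hadamardPreimage W := by
    simp [hadamardPreimage, hab]
  rcases h.mem_or_mem hxy with hx | hy
  · simpa using hx _ (hmem (Pi.single i 1) 0 (mul_zero _))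
  · simpa using hy _ (hmem 0 (Pi.single i 1) (zero_mul _))

theorem eval_eq_zero_on_hadamardPreimage_of_inl_ne_zero [Infinite K] {W : Submodule K (ι → K)}
    {z : ι → K} (hz : z ∈ W) (hz0 : ∀ i, z i ≠ 0) {f : MvPolynomial (ι ⊕ ι) K}
    (hf : ∀ q ∈ hadamardPreimage W, (∀ i, q (Sum.inl i) ≠ 0) → eval q f = 0)
    {p : ι ⊕ ι → K} (hp : p ∈ hadamardPreimage W) : eval p f = 0 := by
  choose x y hx0 hy0 hxy hx using
    fun i => exists_curve_eval_mul_eval_eq (p (Sum.inl i)) (p (Sum.inr i)) (hz0 i)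
  have hcurve := MvPolynomial.eval_eq_zero_of_eval_curve f (Sum.elim x y) 0 fun s hs => by
    refine hf _ ?_ fun i => by simpa using hx i s hs
    have : (fun k => (Sum.elim x y k).eval s) ∘ Sum.inl *
        (fun k => (Sum.elim x y k).eval s) ∘ Sum.inr = p ∘ Sum.inl * p ∘ Sum.inr + s ^ 2 • z := by
      ext i
      simp [hxy]
    simpa [hadamardPreimage, this] using W.add_mem hp (W.smul_mem _ hz)
  have hp_eq : (fun k => (Sum.elim x y k).eval 0) = p := by
    ext (i | i) <;> simp [hx0, hy0]
  rwa [hp_eq] at hcurve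

variable [Fintype ι] [DecidableEq ι]

def hadamardParamPoint (t w : ι → K) : ι ⊕ ι → K :=
  Sum.elim t fun i => w i * ∏ k ∈ Finset.univ.erase i, t k

theorem hadamardParamPoint_mem {W : Submodule K (ι → K)} (t : ι → K) {w : ι → K} (hw : w ∈ W) :
    hadamardParamPoint t w ∈ hadamardPreimage W := by
  have : hadamardParamPoint t w ∘ Sum.inl * hadamardParamPoint t w ∘ Sum.inr =
      (∏ k, t k) • w := by
    ext i
    simp [hadamardParamPoint, ← Finset.mul_prod_erase _ t (Finset.mem_univ i)]
    ring
  simpa [hadamardPreimage, this] using W.smul_mem _ hw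

theorem eq_hadamardParamPoint {W : Submodule K (ι → K)} {p : ι ⊕ ι → K}
    (hp : p ∈ hadamardPreimage W) (hp0 : ∀ i, p (Sum.inl i) ≠ 0) :
    ∃ w ∈ W, p = hadamardParamPoint (p ∘ Sum.inl) w := by
  refine ⟨(∏ k, p (Sum.inl k))⁻¹ • (p ∘ Sum.inl * p ∘ Sum.inr), W.smul_mem _ hp, ?_⟩
  ext (i | i)
  · rfl
  · have hne : ∏ k ∈ Finset.univ.erase i, p (Sum.inl k) ≠ 0 :=
      Finset.prod_ne_zero_iff.mpr fun k _ => hp0 k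
    simp [hadamardParamPoint,
      ← Finset.mul_prod_erase _ (fun k => p (Sum.inl k)) (Finset.mem_univ i)]
    field_simp [hp0 i, hne]

variable (W : Submodule K (ι → K))

noncomputable def hadamardParam : ι ⊕ ι → MvPolynomial (ι ⊕ Fin (Module.finrank K W)) K :=
  Sum.elim (fun i => X (Sum.inl i))
    fun i => (∑ l, C ((Module.finBasis K W l : ι → K) i) * X (Sum.inr l)) *
      ∏ k ∈ Finset.univ.erase i, X (Sum.inl k)

theorem eval_hadamardParam (t : ι → K) (c : Fin (Module.finrank K W) → K) :
    (fun s => eval (Sum.elim t c) (hadamardParam W s)) =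
      hadamardParamPoint t ((Module.finBasis K W).equivFun.symm c) := by
  ext (i | i) <;>
    simp [hadamardParam, hadamardParamPoint, Module.Basis.equivFun_symm_apply, mul_comm]

theorem isPrime_vanishingIdeal_hadamardPreimage [Infinite K] {z : ι → K} (hz : z ∈ W)
    (hz0 : ∀ i, z i ≠ 0) : (vanishingIdeal K (hadamardPreimage W)).IsPrime := by
  suffices vanishingIdeal K (hadamardPreimage W) = RingHom.ker (bind₁ (hadamardParam W)) from
    this ▸ RingHom.ker_isPrime _
  have heval (v : ι ⊕ Fin (Module.finrank K W) → K) (f : MvPolynomial (ι ⊕ ι) K) :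
      eval v (bind₁ (hadamardParam W) f) = eval (fun s => eval v (hadamardParam W s)) f := by
    simp only [← coe_aeval_eq_eval]
    exact aeval_bind₁ _ _ _
  ext f
  simp only [mem_vanishingIdeal_iff, RingHom.mem_ker]
  constructor
  · intro hf
    refine MvPolynomial.funext fun v => ?_
    rw [heval, map_zero, ← Sum.elim_comp_inl_inr v, eval_hadamardParam]
    exact hf _ (hadamardParamPoint_mem _ (Submodule.coe_mem _))
  · intro hf p hp
    refine eval_eq_zero_on_hadamardPreimage_of_inl_ne_zero hz hz0 (fun q hq hq0 => ?_) hp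
    obtain ⟨w, hw, hqw⟩ := eq_hadamardParamPoint hq hq0
    rw [hqw]
    have := heval (Sum.elim (q ∘ Sum.inl) ((Module.finBasis K W).equivFun ⟨w, hw⟩)) f
    rwa [eval_hadamardParam, LinearEquiv.symm_apply_apply, hf, map_zero, eq_comm] at this

theorem isPrime_vanishingIdeal_hadamardPreimage_iff [Infinite K] :
    (vanishingIdeal K (hadamardPreimage W)).IsPrime ↔ ∀ i, ∃ z ∈ W, z i ≠ 0 := by
  refine ⟨exists_apply_ne_zero_of_isPrime_vanishingIdeal, fun h => ?_⟩
  obtain ⟨z, hz, hz0⟩ := W.exists_forall_apply_ne_zero h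
  exact isPrime_vanishingIdeal_hadamardPreimage W hz hz0

end HadamardPreimage

theorem zeroLocus_span_range_sum_mul {K ι m : Type*} [Field K] [Fintype ι] (S : Matrix ι m K) :
    zeroLocus K (Ideal.span (Set.range fun j =>
      ∑ i, C (S i j) * X (Sum.inl i) * X (Sum.inr i))) =
      hadamardPreimage (LinearMap.ker S.vecMulLinear) := by
  ext p
  simp [zeroLocus_span, hadamardPreimage, funext_iff, vecMul, dotProduct, mul_comm, mul_left_comm]

theorem stmt9_general {𝕜 : Type*} [Field 𝕜] [IsAlgClosed 𝕜] {n r : ℕ}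
    (S : Matrix (Fin n) (Fin r) 𝕜)
    (I : Ideal (MvPolynomial (Fin n ⊕ Fin n) 𝕜))
    (hI : I = Ideal.span (Set.range fun j : Fin r =>
      ∑ i : Fin n, MvPolynomial.C (S i j) *
        MvPolynomial.X (Sum.inl i) * MvPolynomial.X (Sum.inr i))) :
    IrreducibleSpace (PrimeSpectrum (MvPolynomial (Fin n ⊕ Fin n) 𝕜 ⧸ I)) ↔
      ∀ i : Fin n,
        (S.submatrix (fun k : {j : Fin n // j ≠ i} => (k : Fin n)) id).rank = S.rank := by
  subst hI
  rw [PrimeSpectrum.irreducibleSpace_quotient_iff,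
    ← vanishingIdeal_zeroLocus_eq_radical (K := 𝕜), zeroLocus_span_range_sum_mul,
    isPrime_vanishingIdeal_hadamardPreimage_iff]
  simp only [rank_submatrix_ne_eq_rank_iff, LinearMap.mem_ker, vecMulLinear_apply]

/-- The null fiber of the moment map of a torus representation with weight matrix `S`
(the closed subscheme of `V ⊕ V*` cut out by `∑ᵢ S i j · xᵢ · yᵢ = 0` for `j = 1,…,r`)
is irreducible iff for every `i`, deleting the `i`-th row of `S` does not lower its
rank. -/
theorem stmt9 {𝕜 : Type*} [Field 𝕜] [IsAlgClosed 𝕜] [CharZero 𝕜] {n r : ℕ}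
    (S : Matrix (Fin n) (Fin r) 𝕜)
    (I : Ideal (MvPolynomial (Fin n ⊕ Fin n) 𝕜))
    (hI : I = Ideal.span (Set.range fun j : Fin r =>
      ∑ i : Fin n, MvPolynomial.C (S i j) *
        MvPolynomial.X (Sum.inl i) * MvPolynomial.X (Sum.inr i))) :
    IrreducibleSpace (PrimeSpectrum (MvPolynomial (Fin n ⊕ Fin n) 𝕜 ⧸ I)) ↔
      ∀ i : Fin n,
        (S.submatrix (fun k : {j : Fin n // j ≠ i} => (k : Fin n)) id).rank = S.rank :=
  stmt9_general S I hI
end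

section
/- Suppose the weight set {s_1,…,s_n} admits a partition {1,…,n} = I_0 ⊔ I_1 ⊔ … ⊔ I_l such that (i) ⟨s_i : all i⟩ = ⊕_{j=0}^l ⟨s_i : i ∈ I_j⟩, (ii) the weights in I_0 are linearly independent while for j ≥ 1 the weights in I_j span a space of dimension #I_j − 1, and (iii) for j ≥ 1, 0 is a strictly positive rational combination of {s_i : i ∈ I_j}. Then for every subset Ĩ ⊆ {1,…,n} with 0 ∉ CH({s_i : i ∈ Ĩ}), the family {s_i : i ∈ Ĩ} is linearly independent. -/
/-!
In a block `I_j` with `j ≥ 1` the family has exactly `#I_j` vectors spanning a space of dimension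
`#I_j - 1`, and every vector lies in the span of the others because the positive relation has
no zero coefficient. Removing any one index therefore leaves a family whose size equals the
dimension of its span, which is independent. A subset `Ĩ` with `0 ∉ CH(s(Ĩ))` cannot contain a
whole block `I_j`, `j ≥ 1`, since the normalised positive relation would put `0` in the convex
hull; so each `Ĩ ∩ I_j` is independent, and independence of the spans of the blocks glues the
pieces together.
-/

open Finset Submodule Module

section LinearAlgebra

variable {ι V : Type*} [AddCommGroup V] {s : ι → V}

theorem LinearIndepOn.of_iSupIndep_span {R κ : Type*} [Ring R] [Module R V] {P : κ → Set ι}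
    (hP : iSupIndep fun j => span R (s '' P j)) (hcover : ∀ i, ∃ j, i ∈ P j) {T : Set ι}
    (hT : ∀ j, LinearIndepOn R s (T ∩ P j)) : LinearIndepOn R s T := by
  have hQ : iSupIndep fun j => span R (Set.range fun i : ↥(T ∩ P j) => s i) :=
    hP.mono fun j => span_mono <| by
      rintro _ ⟨i, rfl⟩
      exact ⟨i, i.2.2, rfl⟩
  have hsigma : LinearIndependent R fun p : Σ j, ↥(T ∩ P j) => s p.2 :=
    linearIndependent_iUnion_finite hT fun j t _ hj => hQ.disjoint_biSup hj
  choose block hblock using hcover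
  refine hsigma.comp (fun i : T => ⟨block i, (i : ι), i.2, hblock i⟩) fun a b hab => ?_
  exact Subtype.ext (congrArg (fun p : Σ j, ↥(T ∩ P j) => (p.2 : ι)) hab)

variable {K : Type*} [Field K] [Module K V]

theorem mem_span_image_erase_of_sum_smul_eq_zero [DecidableEq ι] {P : Finset ι} {α : ι → K}
    {i₀ : ι} (hi₀ : i₀ ∈ P) (hα : α i₀ ≠ 0) (hrel : ∑ i ∈ P, α i • s i = 0) :
    s i₀ ∈ span K (s '' ↑(P.erase i₀)) := by
  rw [← sum_erase_add P _ hi₀, add_eq_zero_iff_eq_neg] at hrel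
  have hs : s i₀ = -(α i₀)⁻¹ • ∑ i ∈ P.erase i₀, α i • s i := by
    rw [hrel, neg_smul, smul_neg, neg_neg, smul_smul, inv_mul_cancel₀ hα, one_smul]
  rw [hs]
  exact smul_mem _ _ <| sum_mem fun i hi => smul_mem _ _ <| subset_span ⟨i, hi, rfl⟩

theorem linearIndepOn_erase_of_card_eq_finrank_add_one [DecidableEq ι] {P : Finset ι}
    (hP : #P = finrank K (span K (s '' ↑P)) + 1) {i₀ : ι} (hi₀ : i₀ ∈ P)
    (hspan : s i₀ ∈ span K (s '' ↑(P.erase i₀))) :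
    LinearIndepOn K s ↑(P.erase i₀) := by
  have hspan_eq : span K (s '' ↑(P.erase i₀)) = span K (s '' ↑P) := by
    refine le_antisymm (span_mono (Set.image_mono (erase_subset i₀ P))) (span_le.mpr ?_)
    rintro _ ⟨i, hi, rfl⟩
    by_cases h : i = i₀
    · exact h ▸ hspan
    · exact subset_span ⟨i, mem_erase.mpr ⟨h, hi⟩, rfl⟩
  refine linearIndependent_iff_card_eq_finrank_span.mpr ?_
  rw [Set.finrank, ← Set.image_eq_range, hspan_eq]
  simp only [Finset.coe_sort_coe, Fintype.card_coe]
  rw [card_erase_of_mem hi₀, hP, Nat.add_sub_cancel]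

theorem linearIndepOn_of_ssubset_of_card_eq_finrank_add_one {P : Finset ι}
    (hP : #P = finrank K (span K (s '' ↑P)) + 1) {α : ι → K} (hα : ∀ i ∈ P, α i ≠ 0)
    (hrel : ∑ i ∈ P, α i • s i = 0) {T : Set ι} (hT : T ⊂ ↑P) :
    LinearIndepOn K s T := by
  classical
  obtain ⟨i₀, hi₀P, hi₀T⟩ := Set.exists_of_ssubset hT
  refine (linearIndepOn_erase_of_card_eq_finrank_add_one hP hi₀P
    (mem_span_image_erase_of_sum_smul_eq_zero hi₀P (hα i₀ hi₀P) hrel)).mono ?_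
  intro i hi
  exact mem_erase.mpr ⟨fun h => hi₀T (h ▸ hi), hT.subset hi⟩

end LinearAlgebra

theorem zero_mem_convexHull_of_sum_smul_eq_zero {R V ι : Type*} [Field R] [LinearOrder R]
    [IsStrictOrderedRing R] [AddCommGroup V] [Module R V] {s : ι → V} {P : Finset ι}
    (hP : P.Nonempty) {α : ι → R} (hα : ∀ i ∈ P, 0 < α i) (hrel : ∑ i ∈ P, α i • s i = 0) :
    (0 : V) ∈ convexHull R (s '' ↑P) := by
  have h := P.centerMass_mem_convexHull (fun i hi => (hα i hi).le) (sum_pos hα hP)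
    (fun i hi => Set.mem_image_of_mem s hi)
  rwa [centerMass, hrel, smul_zero] at h

theorem stmt14_general {W : Type*} [AddCommGroup W] [Module ℚ W] {n l : ℕ}
    (s : Fin n → W) (P : Fin (l + 1) → Finset (Fin n))
    (hcover : ∀ i : Fin n, ∃ j, i ∈ P j)
    (hsum : iSupIndep fun j => Submodule.span ℚ (s '' ↑(P j)))
    (h0 : LinearIndependent ℚ (fun i : ↥(P 0) => s i))
    (hdim : ∀ j, j ≠ 0 →
      (P j).card = Module.finrank ℚ ↥(Submodule.span ℚ (s '' ↑(P j))) + 1)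
    (hpos : ∀ j, j ≠ 0 →
      ∃ α : Fin n → ℚ, (∀ i ∈ P j, 0 < α i) ∧ ∑ i ∈ P j, α i • s i = 0) :
    ∀ It : Finset (Fin n), (0 : W) ∉ convexHull ℚ (s '' ↑It) →
      LinearIndependent ℚ (fun i : ↥It => s i) := by
  intro It hIt
  refine LinearIndepOn.of_iSupIndep_span (P := fun j => (P j : Set (Fin n)))
    (T := (It : Set (Fin n))) hsum hcover fun j => ?_
  rcases eq_or_ne j 0 with rfl | hj
  · exact LinearIndepOn.mono h0 Set.inter_subset_right
  obtain ⟨α, hα, hrel⟩ := hpos j hj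
  refine linearIndepOn_of_ssubset_of_card_eq_finrank_add_one (hdim j hj)
    (fun i hi => (hα i hi).ne') hrel (Set.inter_subset_right.ssubset_of_not_subset ?_)
  intro hPj
  have hPj_ne : (P j).Nonempty := by
    rw [← card_pos, hdim j hj]
    omega
  exact hIt <| convexHull_mono (Set.image_mono fun i hi => (hPj hi).1)
    (zero_mem_convexHull_of_sum_smul_eq_zero hPj_ne hα hrel)

/-- Suppose the weights `s_1, …, s_n` admit a partition `{1,…,n} = I_0 ⊔ I_1 ⊔ … ⊔ I_l`
such that (i) the spans of the blocks are in direct sum, (ii) the weights in `I_0` are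
linearly independent while for `j ≥ 1` the weights of `I_j` span a space of dimension
`#I_j − 1`, and (iii) for `j ≥ 1`, `0` is a strictly positive rational combination of
`{s_i : i ∈ I_j}`. Then every subset `Ĩ` with `0 ∉ CH({s_i : i ∈ Ĩ})` consists of
linearly independent weights. -/
theorem stmt14 {W : Type*} [AddCommGroup W] [Module ℚ W] {n l : ℕ}
    (s : Fin n → W) (P : Fin (l + 1) → Finset (Fin n))
    (hdisj : ∀ j j' : Fin (l + 1), j ≠ j' → Disjoint (P j) (P j'))
    (hcover : ∀ i : Fin n, ∃ j, i ∈ P j)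
    (hsum : iSupIndep fun j => Submodule.span ℚ (s '' ↑(P j)))
    (h0 : LinearIndependent ℚ (fun i : ↥(P 0) => s i))
    (hdim : ∀ j, j ≠ 0 →
      (P j).card = Module.finrank ℚ ↥(Submodule.span ℚ (s '' ↑(P j))) + 1)
    (hpos : ∀ j, j ≠ 0 →
      ∃ α : Fin n → ℚ, (∀ i ∈ P j, 0 < α i) ∧ ∑ i ∈ P j, α i • s i = 0) :
    ∀ It : Finset (Fin n), (0 : W) ∉ convexHull ℚ (s '' ↑It) →
      LinearIndependent ℚ (fun i : ↥It => s i) :=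
  stmt14_general s P hcover hsum h0 hdim hpos
end

section
/- Suppose s_1,…,s_n ∈ ℚ^r admit a partition as in the visibility criterion (blocks I_0 with independent weights and blocks I_j, j ≥ 1, each carrying a unique positive relation ∑_{i∈I_j} α_i s_i = 0 with all α_i > 0, with spans in direct sum). If s_n ∈ ⟨s_1,…,s_{n−1}⟩ (where the partition is of {1,…,n−1}), then there exists a subset Ĩ ⊆ {1,…,n−1} and nonzero rationals (β_i)_{i∈Ĩ} with s_n = ∑_{i∈Ĩ} β_i s_i, such that Ĩ ∩ I_j ≠ I_j for every j ≥ 1, and β_i > 0 for every i ∈ Ĩ ∩ (I_1 ∪ … ∪ I_l). -/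
/-!
Write `v = ∑ cᵢ tᵢ`. For every block `I_j`, `j ≠ 0`, adding `λ_j` times the positive relation
`∑_{i ∈ I_j} α_i t_i = 0` does not change the sum; the choice `λ_j = max_{i ∈ I_j} (-cᵢ / αᵢ)`
makes all coefficients on `I_j` nonnegative and at least one of them zero. Since the blocks are
disjoint these shifts do not interact, and the support of the new coefficients is the set `Ĩ`.
-/

open Finset

section

variable {ι κ K M : Type*} [Field K] [LinearOrder K] [IsStrictOrderedRing K]
  [AddCommGroup M] [Module K M]

theorem exists_add_mul_nonneg_and_eq_zero {s : Finset ι} (hs : s.Nonempty) {α : ι → K}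
    (hα : ∀ i ∈ s, 0 < α i) (c : ι → K) :
    ∃ μ : K, (∀ i ∈ s, 0 ≤ c i + μ * α i) ∧ ∃ i ∈ s, c i + μ * α i = 0 := by
  obtain ⟨i₀, hi₀, hmax⟩ := exists_mem_eq_sup' hs fun i => -c i / α i
  refine ⟨s.sup' hs fun i => -c i / α i, fun i hi => ?_, i₀, hi₀, ?_⟩
  · have hle : -c i / α i ≤ s.sup' hs fun i => -c i / α i := le_sup' (fun i => -c i / α i) hi
    rw [div_le_iff₀ (hα i hi)] at hle
    linarith
  · rw [hmax, div_mul_cancel₀ _ (hα i₀ hi₀).ne', add_neg_cancel]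

theorem exists_coeffs_nonneg_and_vanishing_on_blocks [Fintype ι] [DecidableEq ι] {J : Finset κ}
    {P : κ → Finset ι} (hdisj : (J : Set κ).PairwiseDisjoint P)
    (hne : ∀ j ∈ J, (P j).Nonempty) {α : κ → ι → K} (hα : ∀ j ∈ J, ∀ i ∈ P j, 0 < α j i)
    {t : ι → M} (hrel : ∀ j ∈ J, ∑ i ∈ P j, α j i • t i = 0) (c : ι → K) :
    ∃ β : ι → K, ∑ i, β i • t i = ∑ i, c i • t i ∧
      ∀ j ∈ J, (∀ i ∈ P j, 0 ≤ β i) ∧ ∃ i ∈ P j, β i = 0 := by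
  choose! μ hμ using fun j hj => exists_add_mul_nonneg_and_eq_zero (hne j hj) (hα j hj) c
  set β : ι → K := fun i => c i + ∑ j ∈ J, if i ∈ P j then μ j * α j i else 0
  have hβ : ∀ j ∈ J, ∀ i ∈ P j, β i = c i + μ j * α j i := by
    intro j hj i hi
    simp only [β]
    rw [sum_eq_single_of_mem j hj fun j' hj' hj'j => if_neg fun hi' =>
      disjoint_left.mp (hdisj hj' hj hj'j) hi' hi, if_pos hi]
  have hshift : ∑ i, (∑ j ∈ J, if i ∈ P j then μ j * α j i else 0) • t i = 0 := by
    simp_rw [sum_smul, ite_smul, zero_smul]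
    rw [sum_comm]
    refine sum_eq_zero fun j hj => ?_
    rw [sum_ite_mem, univ_inter]
    simp_rw [mul_smul]
    rw [← smul_sum, hrel j hj, smul_zero]
  refine ⟨β, ?_, fun j hj => ⟨fun i hi => ?_, ?_⟩⟩
  · simp only [β, add_smul, sum_add_distrib, hshift, add_zero]
  · rw [hβ j hj i hi]
    exact (hμ j hj).1 i hi
  · obtain ⟨i, hi, hzero⟩ := (hμ j hj).2
    exact ⟨i, hi, (hβ j hj i hi).trans hzero⟩

end

theorem stmt15_general {W : Type*} [AddCommGroup W] [Module ℚ W] {m l : ℕ}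
    (t : Fin m → W) (v : W) (P : Fin (l + 1) → Finset (Fin m))
    (hdisj : ∀ j j' : Fin (l + 1), j ≠ j' → Disjoint (P j) (P j'))
    (hdim : ∀ j, j ≠ 0 →
      (P j).card = Module.finrank ℚ ↥(Submodule.span ℚ (t '' ↑(P j))) + 1)
    (hpos : ∀ j, j ≠ 0 →
      ∃ α : Fin m → ℚ, (∀ i ∈ P j, 0 < α i) ∧ ∑ i ∈ P j, α i • t i = 0)
    (hv : v ∈ Submodule.span ℚ (Set.range t)) :
    ∃ (It : Finset (Fin m)) (β : Fin m → ℚ),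
      (∀ i ∈ It, β i ≠ 0) ∧ v = ∑ i ∈ It, β i • t i ∧
      (∀ j, j ≠ 0 → It ∩ P j ≠ P j) ∧
      (∀ j, j ≠ 0 → ∀ i ∈ It ∩ P j, 0 < β i) := by
  classical
  obtain ⟨c, hc⟩ := (Submodule.mem_span_range_iff_exists_fun ℚ).mp hv
  choose! α hα hrel using hpos
  have hJ : ∀ j, j ∈ ({0}ᶜ : Finset (Fin (l + 1))) ↔ j ≠ 0 := by simp
  obtain ⟨β, hβ, hblock⟩ := exists_coeffs_nonneg_and_vanishing_on_blocks (J := {0}ᶜ)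
    (fun j _ j' _ => hdisj j j')
    (fun j hj => card_pos.mp (by rw [hdim j ((hJ j).1 hj)]; omega))
    (fun j hj => hα j ((hJ j).1 hj)) (fun j hj => hrel j ((hJ j).1 hj)) c
  have hsupp : ∀ i ∈ univ.filter (β · ≠ 0), β i ≠ 0 := fun i hi => (mem_filter.mp hi).2
  refine ⟨univ.filter (β · ≠ 0), β, hsupp, ?_, fun j hj hIj => ?_, fun j hj i hi => ?_⟩
  · rw [sum_filter_of_ne fun i _ hi => left_ne_zero_of_smul hi, hβ, hc]
  · obtain ⟨i, hi, hzero⟩ := (hblock j ((hJ j).2 hj)).2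
    exact hsupp i (mem_inter.mp (hIj ▸ hi)).1 hzero
  · exact ((hblock j ((hJ j).2 hj)).1 i (mem_inter.mp hi).2).lt_of_ne'
      (hsupp i (mem_inter.mp hi).1)

/-- Inductive step of the visibility criterion: suppose the weights `t_1, …, t_m` admit
a partition into blocks `I_0, I_1, …, I_l` as in the visibility criterion (block `I_0`
linearly independent, each block `I_j`, `j ≥ 1`, of dimension `#I_j − 1` carrying a
strictly positive relation, spans in direct sum). If `v ∈ ⟨t_1, …, t_m⟩`, then there is
a subset `Ĩ` and nonzero rationals `(β_i)_{i ∈ Ĩ}` with `v = ∑_{i∈Ĩ} β_i t_i`, such that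
`Ĩ ∩ I_j ≠ I_j` for every `j ≥ 1` and `β_i > 0` for every `i ∈ Ĩ ∩ (I_1 ∪ … ∪ I_l)`. -/
theorem stmt15 {W : Type*} [AddCommGroup W] [Module ℚ W] {m l : ℕ}
    (t : Fin m → W) (v : W) (P : Fin (l + 1) → Finset (Fin m))
    (hdisj : ∀ j j' : Fin (l + 1), j ≠ j' → Disjoint (P j) (P j'))
    (hcover : ∀ i : Fin m, ∃ j, i ∈ P j)
    (hsum : iSupIndep fun j => Submodule.span ℚ (t '' ↑(P j)))
    (h0 : LinearIndependent ℚ (fun i : ↥(P 0) => t i))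
    (hdim : ∀ j, j ≠ 0 →
      (P j).card = Module.finrank ℚ ↥(Submodule.span ℚ (t '' ↑(P j))) + 1)
    (hpos : ∀ j, j ≠ 0 →
      ∃ α : Fin m → ℚ, (∀ i ∈ P j, 0 < α i) ∧ ∑ i ∈ P j, α i • t i = 0)
    (hv : v ∈ Submodule.span ℚ (Set.range t)) :
    ∃ (It : Finset (Fin m)) (β : Fin m → ℚ),
      (∀ i ∈ It, β i ≠ 0) ∧ v = ∑ i ∈ It, β i • t i ∧
      (∀ j, j ≠ 0 → It ∩ P j ≠ P j) ∧
      (∀ j, j ≠ 0 → ∀ i ∈ It ∩ P j, 0 < β i) :=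
  stmt15_general t v P hdisj hdim hpos hv
end

section
/- Let x be an element of 𝔥_1 in a graded reductive Lie algebra, with Jordan decomposition x = x_s + x_n (x_s, x_n ∈ 𝔥_1), and let 𝔩 = 𝔥^{x_s} be the centralizer of x_s (the generalized 0-eigenspace of ad x). Writing 𝔮 for the sum of the other generalized eigenspaces of ad x, one has 𝔥 = 𝔩 ⊕ 𝔮, 𝔥·x = (ad x_n)(𝔩) ⊕ 𝔮, and hence, intersecting with 𝔥_1: 𝔥_0·x = 𝔩_0·x_n ⊕ 𝔮_1, so that codim_{𝔥_1}(H_0·x) = codim_{𝔩_1}(L_0·x_n). -/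
/-!
Since `ad s` is semisimple, `ad n` nilpotent and the two commute, `ker (ad s)` is the generalized
`0`-eigenspace of `ad x`, so `𝔥 = 𝔩 ⊕ 𝔮` is the Fitting decomposition of `ad x`:
`𝔩 = ker (ad x)^N`, `𝔮 = range (ad x)^N`, `ad x` is invertible on `𝔮` and agrees with `ad n`
on `𝔩`. As `ad x` is homogeneous of degree `1`, both `𝔩` and `𝔮` are graded subspaces, so the
decomposition can be intersected with each `𝔥_i`; a graded preimage of `𝔮_1` under `ad x` is
found by taking the degree-`0` component of any preimage. The codimension formula is then
dimension counting in `𝔥_1 = 𝔩_1 ⊕ 𝔮_1`.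
-/

open Module LieAlgebra

namespace Module.End

section CommRing

variable {R M : Type*} [CommRing R] [AddCommGroup M] [Module R M] {f g : End R M}

lemma ker_le_maxGenEigenspace_zero_of_isNilpotent_sub (hfg : Commute f g)
    (hnil : IsNilpotent (f - g)) : LinearMap.ker g ≤ f.maxGenEigenspace 0 := by
  intro a ha
  obtain ⟨k, hk⟩ := hnil
  -- `f ^ k - (f - g) ^ k` has the right factor `f - (f - g) = g`, which kills `a`.
  have hpow : (f ^ k) a = ((f - g) ^ k) a := by
    rw [← sub_eq_zero, ← LinearMap.sub_apply,
      ← ((Commute.refl f).sub_right hfg).geom_sum₂_mul k, sub_sub_cancel, mul_apply,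
      LinearMap.mem_ker.mp ha, map_zero]
  rw [mem_maxGenEigenspace]
  exact ⟨k, by simpa [hk] using hpow⟩

lemma ker_eq_maxGenEigenspace_zero (hfg : Commute f g) (hss : g.IsFinitelySemisimple)
    (hnil : IsNilpotent (f - g)) : LinearMap.ker g = f.maxGenEigenspace 0 :=
  le_antisymm (ker_le_maxGenEigenspace_zero_of_isNilpotent_sub hfg hnil) fun a ha => by
    simpa using apply_eq_of_mem_of_comm_of_isFinitelySemisimple_of_isNil ha hfg hss hnil

end CommRing

end Module.End

namespace Submodule

section Semiring

variable {R M M₂ : Type*} [Semiring R] [AddCommMonoid M] [AddCommMonoid M₂] [Module R M]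
  [Module R M₂]

lemma map_add_eq_of_le_ker {f g : M →ₗ[R] M₂} {p : Submodule R M} (hp : p ≤ LinearMap.ker f) :
    p.map (f + g) = p.map g :=
  SetLike.coe_injective <| by
    simpa only [map_coe] using Set.image_congr fun a ha => by simp [LinearMap.mem_ker.mp (hp ha)]

end Semiring

section Field

variable {K V : Type*} [Field K] [AddCommGroup V] [Module K V]

lemma map_eq_self_of_disjoint_ker {f : End K V} {p : Submodule K V} [FiniteDimensional K p]
    (hp : p.map f ≤ p) (hker : Disjoint p (LinearMap.ker f)) : p.map f = p := by
  have hmaps : Set.MapsTo f p p := fun a ha => hp ⟨a, ha, rfl⟩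
  have hinj : Function.Injective (f.restrict hmaps) := by
    refine (injective_iff_map_eq_zero _).mpr fun a ha => Subtype.ext ?_
    exact (disjoint_def.mp hker) a a.2 (congrArg Subtype.val ha)
  refine le_antisymm hp fun y hy => ?_
  obtain ⟨z, hz⟩ := LinearMap.injective_iff_surjective.mp hinj ⟨y, hy⟩
  exact ⟨z, z.2, congrArg Subtype.val hz⟩

lemma finrank_sup_eq_add_of_disjoint {s t : Submodule K V} [FiniteDimensional K s]
    [FiniteDimensional K t] (h : Disjoint s t) :
    finrank K ↥(s ⊔ t) = finrank K s + finrank K t := by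
  have := finrank_sup_add_finrank_inf_eq s t
  rwa [h.eq_bot, finrank_bot, add_zero] at this

end Field

end Submodule

namespace Module.End

variable {K V : Type*} [Field K] [AddCommGroup V] [Module K V] [FiniteDimensional K V]
  (f : End K V)

lemma isCompl_maxGenEigenspace_zero_iSup_ne_zero [IsAlgClosed K] :
    IsCompl (f.maxGenEigenspace 0) (⨆ μ ∈ {μ : K | μ ≠ 0}, f.maxGenEigenspace μ) where
  disjoint := f.independent_maxGenEigenspace 0
  codisjoint := by
    rw [codisjoint_iff, ← f.iSup_maxGenEigenspace_eq_top]
    exact (iSup_split_single _ 0).symm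

lemma map_iSup_maxGenEigenspace_ne_zero :
    (⨆ μ ∈ {μ : K | μ ≠ 0}, f.maxGenEigenspace μ).map f =
      ⨆ μ ∈ {μ : K | μ ≠ 0}, f.maxGenEigenspace μ := by
  refine Submodule.map_eq_self_of_disjoint_ker ?_ ?_
  · simp only [Submodule.map_iSup]
    refine iSup₂_mono fun μ _ => ?_
    rintro _ ⟨a, ha, rfl⟩
    exact mapsTo_maxGenEigenspace_of_comm (Commute.refl f) μ ha
  · refine (f.independent_maxGenEigenspace 0).symm.mono_right fun a ha => ?_
    rw [mem_maxGenEigenspace]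
    exact ⟨1, by simpa using ha⟩

lemma iSup_maxGenEigenspace_ne_zero_eq_range_pow [IsAlgClosed K] :
    ⨆ μ ∈ {μ : K | μ ≠ 0}, f.maxGenEigenspace μ = LinearMap.range (f ^ finrank K V) := by
  have hpow (k : ℕ) : (⨆ μ ∈ {μ : K | μ ≠ 0}, f.maxGenEigenspace μ).map (f ^ k) =
      ⨆ μ ∈ {μ : K | μ ≠ 0}, f.maxGenEigenspace μ := by
    induction k with
    | zero => rw [pow_zero, one_eq_id, Submodule.map_id]
    | succ k ih =>
      rw [pow_succ, mul_eq_comp, Submodule.map_comp, map_iSup_maxGenEigenspace_ne_zero, ih]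
  have hzero : (f.maxGenEigenspace 0).map (f ^ finrank K V) = ⊥ := by
    rw [← LinearMap.le_ker_iff_map, maxGenEigenspace_eq_genEigenspace_finrank, genEigenspace_nat]
    simp
  rw [← Submodule.map_top, ← (f.isCompl_maxGenEigenspace_zero_iSup_ne_zero).sup_eq_top,
    Submodule.map_sup, hzero, hpow, bot_sup_eq]

end Module.End

section Graded

open DirectSum

variable {ι R M : Type*} [Semiring R] [AddCommMonoid M] [Module R M] (ℳ : ι → Submodule R M)

def LinearMap.IsHomogeneousOfDegree [Add ι] (f : M →ₗ[R] M) (d : ι) : Prop :=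
  ∀ i, ∀ a ∈ ℳ i, f a ∈ ℳ (i + d)

variable {ℳ}

lemma DirectSum.SetLike.IsHomogeneous.sup_inf_eq [DecidableEq ι] [Decomposition ℳ]
    {p r : Submodule R M}
    (hp : SetLike.IsHomogeneous ℳ p) (hr : SetLike.IsHomogeneous ℳ r) (i : ι) :
    (p ⊔ r) ⊓ ℳ i = p ⊓ ℳ i ⊔ r ⊓ ℳ i := by
  refine le_antisymm ?_ (sup_le (inf_le_inf_right _ le_sup_left) (inf_le_inf_right _ le_sup_right))
  rintro c ⟨hc, hci⟩
  obtain ⟨a, ha, b, hb, rfl⟩ := Submodule.mem_sup.mp hc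
  rw [← decompose_of_mem_same ℳ hci, decompose_add, DirectSum.add_apply, Submodule.coe_add]
  exact Submodule.add_mem_sup ⟨hp i ha, SetLike.coe_mem _⟩ ⟨hr i hb, SetLike.coe_mem _⟩

namespace LinearMap.IsHomogeneousOfDegree

variable {f g : M →ₗ[R] M} {d e : ι}

lemma comp [AddSemigroup ι] (hf : f.IsHomogeneousOfDegree ℳ d)
    (hg : g.IsHomogeneousOfDegree ℳ e) :
    (g ∘ₗ f).IsHomogeneousOfDegree ℳ (d + e) :=
  fun i a ha => by rw [← add_assoc]; exact hg _ _ (hf i a ha)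

lemma pow [AddMonoid ι] {f : Module.End R M} (hf : f.IsHomogeneousOfDegree ℳ d) (k : ℕ) :
    (f ^ k).IsHomogeneousOfDegree ℳ (k • d) := by
  induction k with
  | zero => simp [IsHomogeneousOfDegree]
  | succ k ih => rw [pow_succ, succ_nsmul']; exact hf.comp ih

variable [DecidableEq ι] [Decomposition ℳ]

lemma decompose_apply [AddRightCancelSemigroup ι] (hf : f.IsHomogeneousOfDegree ℳ d) (a : M)
    (i : ι) :
    (decompose ℳ (f a) (i + d) : M) = f (decompose ℳ a i) := by
  induction a using Decomposition.inductionOn ℳ with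
  | zero => simp
  | @homogeneous j b =>
    rcases eq_or_ne j i with rfl | hji
    · rw [decompose_of_mem_same _ (hf _ _ b.2), decompose_coe, of_eq_same]
    · rw [decompose_of_mem_ne _ (hf _ _ b.2) (by simpa using hji), decompose_of_mem_ne _ b.2 hji,
        map_zero]
  | add a b ha hb => simp [ha, hb]

lemma isHomogeneous_ker [AddRightCancelSemigroup ι] (hf : f.IsHomogeneousOfDegree ℳ d) :
    SetLike.IsHomogeneous ℳ (LinearMap.ker f) := fun i a ha => by
  rw [LinearMap.mem_ker, ← hf.decompose_apply, LinearMap.mem_ker.mp ha, decompose_zero,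
    DirectSum.zero_apply, Submodule.coe_zero]

lemma isHomogeneous_range [AddGroup ι] (hf : f.IsHomogeneousOfDegree ℳ d) :
    SetLike.IsHomogeneous ℳ (LinearMap.range f) := by
  rintro i _ ⟨a, rfl⟩
  rw [← sub_add_cancel i d, hf.decompose_apply]
  exact LinearMap.mem_range_self _ _

lemma map_inf_eq [AddRightCancelSemigroup ι] (hf : f.IsHomogeneousOfDegree ℳ d) {p : Submodule R M}
    (hp : SetLike.IsHomogeneous ℳ p) (i : ι) : (p ⊓ ℳ i).map f = p.map f ⊓ ℳ (i + d) := by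
  refine le_antisymm (le_inf (Submodule.map_mono inf_le_left) ?_) ?_
  · rintro _ ⟨a, ⟨-, ha⟩, rfl⟩
    exact hf i a ha
  · rintro _ ⟨⟨a, ha, rfl⟩, hfa⟩
    exact ⟨decompose ℳ a i, ⟨hp i ha, SetLike.coe_mem _⟩,
      by rw [← hf.decompose_apply, decompose_of_mem_same _ hfa]⟩

end LinearMap.IsHomogeneousOfDegree

lemma DirectSum.SetLike.IsHomogeneous.finrank_eq_add_of_isCompl {ι K V : Type*} [DecidableEq ι]
    [Field K] [AddCommGroup V] [Module K V] [FiniteDimensional K V] {ℳ : ι → Submodule K V}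
    [Decomposition ℳ] {p r : Submodule K V} (hp : SetLike.IsHomogeneous ℳ p)
    (hr : SetLike.IsHomogeneous ℳ r) (hpr : IsCompl p r) (i : ι) :
    finrank K (ℳ i) = finrank K ↥(p ⊓ ℳ i) + finrank K ↥(r ⊓ ℳ i) := by
  rw [← Submodule.finrank_sup_eq_add_of_disjoint (hpr.disjoint.mono inf_le_left inf_le_left),
    ← hp.sup_inf_eq hr, hpr.sup_eq_top, top_inf_eq]

end Graded

lemma LieAlgebra.commute_ad_of_lie_eq_zero {R L : Type*} [CommRing R] [LieRing L] [LieAlgebra R L]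
    {a b : L} (h : ⁅a, b⁆ = 0) : Commute (ad R L a) (ad R L b) :=
  LinearMap.ext fun c => by
    change ⁅a, ⁅b, c⁆⁆ = ⁅b, ⁅a, c⁆⁆
    rw [leibniz_lie, h, zero_lie, zero_add]

lemma LieAlgebra.isHomogeneousOfDegree_ad {ι K L : Type*} [AddCommGroup ι] [CommRing K]
    [LieRing L] [LieAlgebra K L] {H : ι → Submodule K L}
    (hgrade : ∀ i j : ι, ∀ a ∈ H i, ∀ b ∈ H j, ⁅a, b⁆ ∈ H (i + j)) {a : L} {j : ι} (ha : a ∈ H j) :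
    (ad K L a).IsHomogeneousOfDegree H j :=
  fun i b hb => add_comm j i ▸ hgrade j i a ha b hb

lemma LieAlgebra.ker_ad_eq_maxGenEigenspace_zero {K L : Type*} [Field K] [LieRing L]
    [LieAlgebra K L] {x s n : L} (hxsn : x = s + n) (hcomm : ⁅s, n⁆ = 0)
    (hss : (ad K L s).IsSemisimple) (hnil : IsNilpotent (ad K L n)) :
    LinearMap.ker (ad K L s) = (ad K L x).maxGenEigenspace 0 := by
  subst hxsn
  refine Module.End.ker_eq_maxGenEigenspace_zero ?_ hss.isFinitelySemisimple ?_ <;>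
    simp only [map_add, add_sub_cancel_left]
  · exact (Commute.refl _).add_left (commute_ad_of_lie_eq_zero hcomm).symm
  · exact hnil

theorem stmt17_general {𝕜 L : Type*} [Field 𝕜] [IsAlgClosed 𝕜]
    [LieRing L] [LieAlgebra 𝕜 L] [FiniteDimensional 𝕜 L] {m : ℕ}
    (H : ZMod m → Submodule 𝕜 L)
    (hgrade : ∀ i j : ZMod m, ∀ a ∈ H i, ∀ b ∈ H j, ⁅a, b⁆ ∈ H (i + j))
    (hind : iSupIndep H) (htop : ⨆ i, H i = ⊤)
    (x s n : L) (hx : x ∈ H 1) (hs : s ∈ H 1)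
    (hxsn : x = s + n) (hcomm : ⁅s, n⁆ = 0)
    (hss : (ad 𝕜 L s).IsSemisimple) (hnil : IsNilpotent (ad 𝕜 L n)) :
    ∀ l q : Submodule 𝕜 L, l = LinearMap.ker (ad 𝕜 L s) →
      q = (⨆ μ ∈ {μ : 𝕜 | μ ≠ 0}, (ad 𝕜 L x).maxGenEigenspace μ) →
    (l ⊔ q = ⊤ ∧ l ⊓ q = ⊥) ∧
    (LinearMap.range (ad 𝕜 L x) = Submodule.map (ad 𝕜 L n) l ⊔ q ∧
      Submodule.map (ad 𝕜 L n) l ⊓ q = ⊥) ∧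
    (Submodule.map (ad 𝕜 L x) (H 0) = Submodule.map (ad 𝕜 L n) (l ⊓ H 0) ⊔ (q ⊓ H 1) ∧
      Submodule.map (ad 𝕜 L n) (l ⊓ H 0) ⊓ (q ⊓ H 1) = ⊥) ∧
    (finrank 𝕜 ↥(H 1) - finrank 𝕜 ↥(Submodule.map (ad 𝕜 L x) (H 0))
      = finrank 𝕜 ↥(l ⊓ H 1) - finrank 𝕜 ↥(Submodule.map (ad 𝕜 L n) (l ⊓ H 0))) := by
  intro l q hl hq
  have hlq : IsCompl l q := by
    rw [hl, ker_ad_eq_maxGenEigenspace_zero hxsn hcomm hss hnil, hq]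
    exact (ad 𝕜 L x).isCompl_maxGenEigenspace_zero_iSup_ne_zero
  have hxn {p : Submodule 𝕜 L} (hp : p ≤ l) : p.map (ad 𝕜 L x) = p.map (ad 𝕜 L n) := by
    rw [hxsn, map_add]; exact Submodule.map_add_eq_of_le_ker (hl ▸ hp)
  have hnl : l.map (ad 𝕜 L n) ≤ l := by
    rintro _ ⟨a, ha, rfl⟩
    have ha : ad 𝕜 L s a = 0 := by rwa [hl] at ha
    rw [hl, LinearMap.mem_ker, ← Module.End.mul_apply, (commute_ad_of_lie_eq_zero hcomm).eq,
      Module.End.mul_apply, ha, map_zero]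
  have hqx : q.map (ad 𝕜 L x) = q := hq ▸ (ad 𝕜 L x).map_iSup_maxGenEigenspace_ne_zero
  have hrange : LinearMap.range (ad 𝕜 L x) = l.map (ad 𝕜 L n) ⊔ q := by
    rw [← Submodule.map_top, ← hlq.sup_eq_top, Submodule.map_sup, hxn le_rfl, hqx]
  let := ((DirectSum.isInternal_submodule_iff_iSupIndep_and_iSup_eq_top H).mpr
    ⟨hind, htop⟩).chooseDecomposition
  have hxdeg := isHomogeneousOfDegree_ad hgrade hx
  have hl_hom : DirectSum.SetLike.IsHomogeneous H l :=
    hl ▸ (isHomogeneousOfDegree_ad hgrade hs).isHomogeneous_ker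
  have hq_hom : DirectSum.SetLike.IsHomogeneous H q := by
    rw [hq, Module.End.iSup_maxGenEigenspace_ne_zero_eq_range_pow]
    exact (hxdeg.pow _).isHomogeneous_range
  have hH0 : (H 0).map (ad 𝕜 L x) = (l ⊓ H 0).map (ad 𝕜 L n) ⊔ q ⊓ H 1 := by
    calc (H 0).map (ad 𝕜 L x) = ((l ⊔ q) ⊓ H 0).map (ad 𝕜 L x) := by
          rw [hlq.sup_eq_top, top_inf_eq]
      _ = (l ⊓ H 0).map (ad 𝕜 L n) ⊔ q ⊓ H 1 := by
          rw [hl_hom.sup_inf_eq hq_hom, Submodule.map_sup, hxn inf_le_left,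
            hxdeg.map_inf_eq hq_hom, hqx, zero_add]
  have hH0_disj : Disjoint ((l ⊓ H 0).map (ad 𝕜 L n)) (q ⊓ H 1) :=
    hlq.disjoint.mono ((Submodule.map_mono inf_le_left).trans hnl) inf_le_left
  refine ⟨⟨hlq.sup_eq_top, hlq.inf_eq_bot⟩, ⟨hrange, (hlq.disjoint.mono_left hnl).eq_bot⟩,
    ⟨hH0, hH0_disj.eq_bot⟩, ?_⟩
  rw [hl_hom.finrank_eq_add_of_isCompl hq_hom hlq 1, hH0,
    Submodule.finrank_sup_eq_add_of_disjoint hH0_disj, Nat.add_sub_add_right]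

/-- Let `𝔥 = ⊕_{i∈ℤ/m} 𝔥_i` be a graded finite-dimensional Lie algebra over an
algebraically closed field of characteristic zero, and `x ∈ 𝔥_1` with Jordan
decomposition `x = s + n` (`s, n ∈ 𝔥_1`, `[s,n] = 0`, `ad s` semisimple, `ad n`
nilpotent). Let `𝔩 = 𝔥^s` be the centralizer of `s` (the generalized `0`-eigenspace of
`ad x`) and `𝔮` the sum of the other generalized eigenspaces of `ad x`. Then
`𝔥 = 𝔩 ⊕ 𝔮`, `𝔥·x = (ad n)(𝔩) ⊕ 𝔮`, and intersecting with `𝔥_1`: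
`𝔥_0·x = 𝔩_0·x_n ⊕ 𝔮_1`, whence `codim_{𝔥_1}(𝔥_0·x) = codim_{𝔩_1}(𝔩_0·x_n)`. -/
theorem stmt17 {𝕜 L : Type*} [Field 𝕜] [IsAlgClosed 𝕜] [CharZero 𝕜]
    [LieRing L] [LieAlgebra 𝕜 L] [FiniteDimensional 𝕜 L] {m : ℕ}
    (H : ZMod m → Submodule 𝕜 L)
    (hgrade : ∀ i j : ZMod m, ∀ a ∈ H i, ∀ b ∈ H j, ⁅a, b⁆ ∈ H (i + j))
    (hind : iSupIndep H) (htop : ⨆ i, H i = ⊤)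
    (x s n : L) (hx : x ∈ H 1) (hs : s ∈ H 1) (hn : n ∈ H 1)
    (hxsn : x = s + n) (hcomm : ⁅s, n⁆ = 0)
    (hss : (ad 𝕜 L s).IsSemisimple) (hnil : IsNilpotent (ad 𝕜 L n)) :
    ∀ l q : Submodule 𝕜 L, l = LinearMap.ker (ad 𝕜 L s) →
      q = (⨆ μ ∈ {μ : 𝕜 | μ ≠ 0}, (ad 𝕜 L x).maxGenEigenspace μ) →
    (l ⊔ q = ⊤ ∧ l ⊓ q = ⊥) ∧
    (LinearMap.range (ad 𝕜 L x) = Submodule.map (ad 𝕜 L n) l ⊔ q ∧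
      Submodule.map (ad 𝕜 L n) l ⊓ q = ⊥) ∧
    (Submodule.map (ad 𝕜 L x) (H 0) = Submodule.map (ad 𝕜 L n) (l ⊓ H 0) ⊔ (q ⊓ H 1) ∧
      Submodule.map (ad 𝕜 L n) (l ⊓ H 0) ⊓ (q ⊓ H 1) = ⊥) ∧
    (finrank 𝕜 ↥(H 1) - finrank 𝕜 ↥(Submodule.map (ad 𝕜 L x) (H 0))
      = finrank 𝕜 ↥(l ⊓ H 1) - finrank 𝕜 ↥(Submodule.map (ad 𝕜 L n) (l ⊓ H 0))) :=
  stmt17_general H hgrade hind htop x s n hx hs hxsn hcomm hss hnil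
end
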